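/- Pure reduction sequences preserve the combined history: if (t₁, K₁, P₁, F₁, s, R)_u reduces by pure steps to (t₂, K₂, P₂, F₂, s, R)_u, then P₁ · F₁ = P₂ · F₂ (concatenation of past and future is invariant), and the soup and result are unchanged. -/
import Mathlib


/-- Terms: variables, numerals, successor, let-bindings, and binary choice. -/
inductive Tm : Type
  | var : String → Tm
  | num : ℕ → Tm
  | suc : Tm → Tm
  | lett : String → Tm → Tm → Tm
  | choose : Tm → Tm → Tm
deriving DecidableEq

/-- Substitution of a numeral for a variable. -/
def Tm.subst (x : String) (n : ℕ) : Tm → Tm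
  | .var y => if y = x then .num n else .var y
  | .num m => .num m
  | .suc t => .suc (t.subst x n)
  | .lett y t u => .lett y (t.subst x n) (if y = x then u else u.subst x n)
  | .choose a b => .choose (a.subst x n) (b.subst x n)

/-- Machine continuations: halt, successor frame, and let frame. -/
inductive Kont : Type
  | halt : Kont
  | suc : Kont → Kont
  | lett : String → Tm → Kont → Kont
deriving DecidableEq

/-- A choice `i ∈ {1, 2}` is encoded as a `Bool`: `false` is choice 1, `true` is choice 2.
A history is a list of choices; `P·i` is `P ++ [i]`. -/
abbrev Hist : Type := List Bool

/-- Successor on reversed histories: `next(P·1) = P·2`, `next(P·2) = next(P)`. -/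
def nextRev : List Bool → Option (List Bool)
  | [] => none
  | false :: P => some (true :: P)
  | true :: P => nextRev P

/-- The successor function `next` on histories (`none` when undefined). -/
def nextHist (P : Hist) : Option Hist := (nextRev P.reverse).map List.reverse

/-- Combined-machine configurations `(t, K_P, F, s, R)_u`: the current continuation
carries a past history `P`, each soup entry carries its own past history, and the
machine holds a future `F`. -/
structure MCfg : Type where
  tm : Tm
  k : Kont
  past : Hist
  fut : Hist
  soup : List (ℕ × Kont × Hist)
  res : List ℕ
deriving DecidableEq

/-- The reduction relation of the combined machine, for a fixed initial term `u`. -/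
inductive MStep (u : Tm) : MCfg → MCfg → Prop
  | suc (t K P F s R) : MStep u ⟨.suc t, K, P, F, s, R⟩ ⟨t, .suc K, P, F, s, R⟩
  | sucNum (n K P F s R) : MStep u ⟨.num n, .suc K, P, F, s, R⟩ ⟨.num (n + 1), K, P, F, s, R⟩
  | lett (x t t' K P F s R) :
      MStep u ⟨.lett x t t', K, P, F, s, R⟩ ⟨t, .lett x t' K, P, F, s, R⟩
  | lettNum (n x t' K P F s R) :
      MStep u ⟨.num n, .lett x t' K, P, F, s, R⟩ ⟨t'.subst x n, K, P, F, s, R⟩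
  | chooseFork (n₁ n₂ K P s R) :
      MStep u ⟨.choose (.num n₁) (.num n₂), K, P, [], s, R⟩
              ⟨.num n₁, K, P ++ [false], [], (n₂, K, P ++ [true]) :: s, R⟩
  | haltPop (n n' K' P P' s R) :
      MStep u ⟨.num n, .halt, P, [], (n', K', P') :: s, R⟩
              ⟨.num n', K', P', [], s, n :: R⟩
  | chooseFut (n₁ n₂ K P i F s R) :
      MStep u ⟨.choose (.num n₁) (.num n₂), K, P, i :: F, s, R⟩
              ⟨.num (if i then n₂ else n₁), K, P ++ [i], F, s, R⟩

/-- Pure reductions: the subset of combined-machine reductions that do not depend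
on the soup or result components (the four successor/let rules, plus the
future-consuming choose rule). -/
inductive PureStep (u : Tm) : MCfg → MCfg → Prop
  | suc (t K P F s R) : PureStep u ⟨.suc t, K, P, F, s, R⟩ ⟨t, .suc K, P, F, s, R⟩
  | sucNum (n K P F s R) :
      PureStep u ⟨.num n, .suc K, P, F, s, R⟩ ⟨.num (n + 1), K, P, F, s, R⟩
  | lett (x t t' K P F s R) :
      PureStep u ⟨.lett x t t', K, P, F, s, R⟩ ⟨t, .lett x t' K, P, F, s, R⟩
  | lettNum (n x t' K P F s R) :
      PureStep u ⟨.num n, .lett x t' K, P, F, s, R⟩ ⟨t'.subst x n, K, P, F, s, R⟩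
  | chooseFut (n₁ n₂ K P i F s R) :
      PureStep u ⟨.choose (.num n₁) (.num n₂), K, P, i :: F, s, R⟩
              ⟨.num (if i then n₂ else n₁), K, P ++ [i], F, s, R⟩

/-- The initial combined configuration `(u, halt_∅, ∅, ∅, ∅)_u`. -/
def initMCfg (u : Tm) : MCfg := ⟨u, .halt, [], [], [], []⟩

/-- Reachability of a combined configuration from the initial configuration. -/
def MReachable (u : Tm) (c : MCfg) : Prop :=
  Relation.ReflTransGen (MStep u) (initMCfg u) c

/-- Pure reduction sequences preserve the combined history: the concatenation of
past and future is invariant, and the soup and result are unchanged. -/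
theorem pure_preserves_history (u : Tm) (c c' : MCfg)
    (h : Relation.ReflTransGen (PureStep u) c c') :
    c.past ++ c.fut = c'.past ++ c'.fut ∧ c.soup = c'.soup ∧ c.res = c'.res := by
  induction h with
  | refl => exact ⟨rfl, rfl, rfl⟩
  | tail _ hstep ih =>
    obtain ⟨h1, h2, h3⟩ := ih
    cases hstep with
    | chooseFut n₁ n₂ K P i F s R =>
      exact ⟨by rw [h1]; simp, h2, h3⟩
    | _ => exact ⟨h1, h2, h3⟩
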